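/- A (Λ,Γ) k-morph X is invertible in the category M_k if and only if X is isomorphic (as a k-morph) to X(α) for some k-graph isomorphism α : Γ → Λ. In particular, given invertible X with bijective range and source maps, the map α : Γ → Λ defined by α(γ) = λ where φ(x,γ) = (λ, x') for the unique x ∈ X with s(x) = r(γ), is an isomorphism of k-graphs, and X ≅ X(α). -/

import Mathlib

/-- A `k`-graph structure on a set `Obj` of vertices and a set `Path` of morphisms:
a countable small category together with a degree functor `d : Path → ℕ^k`
satisfying the unique factorisation property. Vertices are identified with
identity morphisms via `ident`.  Composition is a total function, constrained
only on composable pairs (`src p = rng q`). -/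
structure KGraphStr (k : ℕ) (Obj : Type) (Path : Type) where
  src : Path → Obj
  rng : Path → Obj
  ident : Obj → Path
  comp : Path → Path → Path
  d : Path → Fin k → ℕ
  countable : Countable Path
  nonemptyObj : Nonempty Obj
  src_ident : ∀ v, src (ident v) = v
  rng_ident : ∀ v, rng (ident v) = v
  d_ident : ∀ v, d (ident v) = 0
  src_comp : ∀ p q, src p = rng q → src (comp p q) = src q
  rng_comp : ∀ p q, src p = rng q → rng (comp p q) = rng p
  d_comp : ∀ p q, src p = rng q → d (comp p q) = d p + d q
  comp_ident : ∀ p, comp p (ident (src p)) = p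
  ident_comp : ∀ p, comp (ident (rng p)) p = p
  comp_assoc : ∀ p q r, src p = rng q → src q = rng r →
    comp (comp p q) r = comp p (comp q r)
  factor : ∀ p (m n : Fin k → ℕ), d p = m + n →
    ∃! μν : Path × Path, src μν.1 = rng μν.2 ∧ d μν.1 = m ∧ d μν.2 = n ∧
      comp μν.1 μν.2 = p

/-- A `(Λ,Γ)` `k`-morph: a countable set `X` with `r : X → Λ⁰`, `s : X → Γ⁰`
and a structure bijection `φ : X *_{Γ⁰} Γ → Λ *_{Λ⁰} X`, here encoded by its
two components `φl`, `φx` (constrained only on composable pairs) together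
with the bijectivity condition `bij`. -/
structure KMorph {k : ℕ} {OΛ PΛ OΓ PΓ : Type}
    (Λ : KGraphStr k OΛ PΛ) (Γ : KGraphStr k OΓ PΓ) (X : Type) where
  countable : Countable X
  r : X → OΛ
  s : X → OΓ
  φl : X → PΓ → PΛ
  φx : X → PΓ → X
  src_φl : ∀ x γ, s x = Γ.rng γ → Λ.src (φl x γ) = r (φx x γ)
  d_φl : ∀ x γ, s x = Γ.rng γ → Λ.d (φl x γ) = Γ.d γ
  s_φx : ∀ x γ, s x = Γ.rng γ → s (φx x γ) = Γ.src γ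
  rng_φl : ∀ x γ, s x = Γ.rng γ → Λ.rng (φl x γ) = r x
  mult_φl : ∀ x γ₁ γ₂, s x = Γ.rng γ₁ → Γ.src γ₁ = Γ.rng γ₂ →
      φl x (Γ.comp γ₁ γ₂) = Λ.comp (φl x γ₁) (φl (φx x γ₁) γ₂)
  mult_φx : ∀ x γ₁ γ₂, s x = Γ.rng γ₁ → Γ.src γ₁ = Γ.rng γ₂ →
      φx x (Γ.comp γ₁ γ₂) = φx (φx x γ₁) γ₂
  bij : ∀ lam x', Λ.src lam = r x' →
      ∃! p : X × PΓ, s p.1 = Γ.rng p.2 ∧ φl p.1 p.2 = lam ∧ φx p.1 p.2 = x'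

/-- An isomorphism of `(Λ,Γ)` `k`-morphs: a bijection intertwining the
structure maps. -/
structure MorphIso {k : ℕ} {OΛ PΛ OΓ PΓ X Y : Type}
    {Λ : KGraphStr k OΛ PΛ} {Γ : KGraphStr k OΓ PΓ}
    (M : KMorph Λ Γ X) (N : KMorph Λ Γ Y) where
  θ : X ≃ Y
  r_θ : ∀ x, N.r (θ x) = M.r x
  s_θ : ∀ x, N.s (θ x) = M.s x
  φl_θ : ∀ x γ, M.s x = Γ.rng γ → N.φl (θ x) γ = M.φl x γ
  φx_θ : ∀ x γ, M.s x = Γ.rng γ → N.φx (θ x) γ = θ (M.φx x γ)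

/-- The underlying set `X₁ *_{Λ₁⁰} X₂` of the fibred product of two k-morphs. -/
def FibCarrier {k : ℕ} {O₀ P₀ O₁ P₁ O₂ P₂ X₁ X₂ : Type}
    {Λ₀ : KGraphStr k O₀ P₀} {Λ₁ : KGraphStr k O₁ P₁} {Λ₂ : KGraphStr k O₂ P₂}
    (M₁ : KMorph Λ₀ Λ₁ X₁) (M₂ : KMorph Λ₁ Λ₂ X₂) : Type :=
  {p : X₁ × X₂ // M₁.s p.1 = M₂.r p.2}

attribute [reducible] FibCarrier

/-- `P` is *the* fibred product k-morph of `M₁` and `M₂`: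
`r(x₁,x₂) = r(x₁)`, `s(x₁,x₂) = s(x₂)`, and `φ` is obtained by passing a path
through `M₂` and then through `M₁`. -/
def IsFibProd {k : ℕ} {O₀ P₀ O₁ P₁ O₂ P₂ X₁ X₂ : Type}
    {Λ₀ : KGraphStr k O₀ P₀} {Λ₁ : KGraphStr k O₁ P₁} {Λ₂ : KGraphStr k O₂ P₂}
    (M₁ : KMorph Λ₀ Λ₁ X₁) (M₂ : KMorph Λ₁ Λ₂ X₂)
    (P : KMorph Λ₀ Λ₂ (FibCarrier M₁ M₂)) : Prop :=
  (∀ p : FibCarrier M₁ M₂, P.r p = M₁.r p.1.1) ∧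
  (∀ p : FibCarrier M₁ M₂, P.s p = M₂.s p.1.2) ∧
  (∀ (p : FibCarrier M₁ M₂) lam, P.s p = Λ₂.rng lam →
    P.φl p lam = M₁.φl p.1.1 (M₂.φl p.1.2 lam) ∧
    (P.φx p lam).1.1 = M₁.φx p.1.1 (M₂.φl p.1.2 lam) ∧
    (P.φx p lam).1.2 = M₂.φx p.1.2 lam)

/-- `I` is the identity endomorph `I_Λ` on `Λ`: underlying set `Λ⁰`,
`r = s = id`, and `φ(r(λ),λ) = (λ, s(λ))`. -/
def IsIdMorph {k : ℕ} {O P : Type} {Λ : KGraphStr k O P}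
    (I : KMorph Λ Λ O) : Prop :=
  (∀ v, I.r v = v) ∧ (∀ v, I.s v = v) ∧
  (∀ v lam, I.s v = Λ.rng lam → I.φl v lam = lam ∧ I.φx v lam = Λ.src lam)

/-- A morphism (degree-preserving functor) of k-graphs from `Γ` to `Λ`. -/
structure KGraphHom {k : ℕ} {OΓ PΓ OΛ PΛ : Type}
    (Γ : KGraphStr k OΓ PΓ) (Λ : KGraphStr k OΛ PΛ) where
  vmap : OΓ → OΛ
  pmap : PΓ → PΛ
  src_pmap : ∀ p, Λ.src (pmap p) = vmap (Γ.src p)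
  rng_pmap : ∀ p, Λ.rng (pmap p) = vmap (Γ.rng p)
  d_pmap : ∀ p, Λ.d (pmap p) = Γ.d p
  ident_pmap : ∀ v, pmap (Γ.ident v) = Λ.ident (vmap v)
  comp_pmap : ∀ p q, Γ.src p = Γ.rng q →
      pmap (Γ.comp p q) = Λ.comp (pmap p) (pmap q)

/-- `F : Γ → Λ` is a covering: a surjective k-graph morphism restricting to
bijections `vΓ → F(v)Λ` and `Γv → ΛF(v)` for every vertex `v`. -/
def IsCovering {k : ℕ} {OΓ PΓ OΛ PΛ : Type}
    {Γ : KGraphStr k OΓ PΓ} {Λ : KGraphStr k OΛ PΛ}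
    (F : KGraphHom Γ Λ) : Prop :=
  Function.Surjective F.pmap ∧
  (∀ v : OΓ, Set.BijOn F.pmap {p | Γ.rng p = v} {q | Λ.rng q = F.vmap v}) ∧
  (∀ v : OΓ, Set.BijOn F.pmap {p | Γ.src p = v} {q | Λ.src q = F.vmap v})

/-- `M` is the k-morph `X(F)` (also written `ₚX` for a covering `F = p`)
associated with a k-graph morphism `F : Γ → Λ`: underlying set `Γ⁰`,
`r = F` on vertices, `s = id`, and `φ(r(γ), γ) = (F(γ), s(γ))`. -/
def IsXalpha {k : ℕ} {OΓ PΓ OΛ PΛ : Type}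
    {Γ : KGraphStr k OΓ PΓ} {Λ : KGraphStr k OΛ PΛ}
    (F : KGraphHom Γ Λ) (M : KMorph Λ Γ OΓ) : Prop :=
  (∀ v, M.r v = F.vmap v) ∧ (∀ v, M.s v = v) ∧
  (∀ v γ, M.s v = Γ.rng γ → M.φl v γ = F.pmap γ ∧ M.φx v γ = Γ.src γ)

/-- An isomorphism of (higher-rank) graph structures. -/
structure GraphIso {k : ℕ} {O P O' P' : Type}
    (S : KGraphStr k O P) (S' : KGraphStr k O' P') where
  ev : O ≃ O'
  ep : P ≃ P'
  src_ep : ∀ p, S'.src (ep p) = ev (S.src p)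
  rng_ep : ∀ p, S'.rng (ep p) = ev (S.rng p)
  d_ep : ∀ p, S'.d (ep p) = S.d p
  ident_ep : ∀ v, ep (S.ident v) = S'.ident (ev v)
  comp_ep : ∀ p q, S.src p = S.rng q → ep (S.comp p q) = S'.comp (ep p) (ep q)

/-- `M` is invertible in the category `M_k`: there is a k-morph `Y` in the
opposite direction such that both fibred products are isomorphic to the
respective identity endomorphs. -/
def MorphInvertible {k : ℕ} {OΛ PΛ OΓ PΓ X : Type}
    {Λ : KGraphStr k OΛ PΛ} {Γ : KGraphStr k OΓ PΓ}
    (M : KMorph Λ Γ X) : Prop :=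
  ∃ (Y : Type) (N : KMorph Γ Λ Y)
    (P : KMorph Λ Λ (FibCarrier M N)) (Q : KMorph Γ Γ (FibCarrier N M))
    (I : KMorph Λ Λ OΛ) (J : KMorph Γ Γ OΓ),
    IsFibProd M N P ∧ IsFibProd N M Q ∧ IsIdMorph I ∧ IsIdMorph J ∧
    Nonempty (MorphIso P I) ∧ Nonempty (MorphIso Q J)

/-- Degree-zero paths are identities. -/
theorem KGraphStr.eq_ident_of_d_zero {k : ℕ} {O P : Type} (S : KGraphStr k O P)
    {p : P} (h : S.d p = 0) : p = S.ident (S.rng p) := by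
  obtain ⟨mn, _, huniq⟩ := S.factor p 0 0 (by simp [h])
  have h1 := huniq (p, S.ident (S.src p))
    ⟨(S.rng_ident _).symm, h, S.d_ident _, S.comp_ident p⟩
  have h2 := huniq (S.ident (S.rng p), p)
    ⟨S.src_ident _, S.d_ident _, h, S.ident_comp p⟩
  exact congrArg Prod.fst (h1.trans h2.symm)

/-- The object set of a k-graph is countable. -/
theorem KGraphStr.countableObj {k : ℕ} {O P : Type} (S : KGraphStr k O P) :
    Countable O := by
  have : Countable P := S.countable
  exact Function.Injective.countable (f := S.ident)
    (fun a b h => by rw [← S.src_ident a, h, S.src_ident])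

/-- The identity endomorph on `Λ`. -/
def idMorph {k : ℕ} {O P : Type} (Λ : KGraphStr k O P) : KMorph Λ Λ O where
  countable := Λ.countableObj
  r := id
  s := id
  φl _ lam := lam
  φx _ lam := Λ.src lam
  src_φl _ _ _ := rfl
  d_φl _ _ _ := rfl
  s_φx _ _ _ := rfl
  rng_φl _ _ h := h.symm
  mult_φl _ _ _ _ _ := rfl
  mult_φx v l₁ l₂ _ h := Λ.src_comp l₁ l₂ h
  bij lam v' h := by
    refine ⟨(Λ.rng lam, lam), ⟨rfl, rfl, h⟩, ?_⟩
    rintro ⟨v, l⟩ ⟨h1, h2, h3⟩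
    simp only at h1 h2 h3 ⊢
    subst h2; exact Prod.ext h1 rfl

theorem idMorph_isIdMorph {k : ℕ} {O P : Type} (Λ : KGraphStr k O P) :
    IsIdMorph (idMorph Λ) :=
  ⟨fun _ => rfl, fun _ => rfl, fun _ _ _ => ⟨rfl, rfl⟩⟩

variable {k : ℕ} {O₀ P₀ O₁ P₁ O₂ P₂ X₁ X₂ : Type}
    {Λ₀ : KGraphStr k O₀ P₀} {Λ₁ : KGraphStr k O₁ P₁} {Λ₂ : KGraphStr k O₂ P₂}

open Classical in
/-- The fibred product of two k-morphs. -/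
noncomputable def fibProd (M₁ : KMorph Λ₀ Λ₁ X₁) (M₂ : KMorph Λ₁ Λ₂ X₂) :
    KMorph Λ₀ Λ₂ (FibCarrier M₁ M₂) where
  countable := by
    have := M₁.countable; have := M₂.countable
    exact Subtype.countable
  r p := M₁.r p.1.1
  s p := M₂.s p.1.2
  φl p γ := M₁.φl p.1.1 (M₂.φl p.1.2 γ)
  φx p γ :=
    if h : M₂.s p.1.2 = Λ₂.rng γ then
      ⟨(M₁.φx p.1.1 (M₂.φl p.1.2 γ), M₂.φx p.1.2 γ), by
        rw [M₁.s_φx _ _ (p.2.trans (M₂.rng_φl _ _ h).symm), M₂.src_φl _ _ h]⟩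
    else p
  src_φl p γ h := by
    simp only [dif_pos h]
    exact M₁.src_φl _ _ (p.2.trans (M₂.rng_φl _ _ h).symm)
  d_φl p γ h := by
    rw [M₁.d_φl _ _ (p.2.trans (M₂.rng_φl _ _ h).symm), M₂.d_φl _ _ h]
  s_φx p γ h := by
    simp only [dif_pos h]
    exact M₂.s_φx _ _ h
  rng_φl p γ h :=
    M₁.rng_φl _ _ (p.2.trans (M₂.rng_φl _ _ h).symm)
  mult_φl p γ₁ γ₂ h1 h2 := by
    replace h1 : M₂.s p.1.2 = Λ₂.rng γ₁ := h1
    have hc1 : M₁.s p.1.1 = Λ₁.rng (M₂.φl p.1.2 γ₁) :=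
      p.2.trans (M₂.rng_φl _ _ h1).symm
    have hs2 : M₂.s (M₂.φx p.1.2 γ₁) = Λ₂.rng γ₂ := (M₂.s_φx _ _ h1).trans h2
    have hc2 : Λ₁.src (M₂.φl p.1.2 γ₁) = Λ₁.rng (M₂.φl (M₂.φx p.1.2 γ₁) γ₂) :=
      (M₂.src_φl _ _ h1).trans (M₂.rng_φl _ _ hs2).symm
    beta_reduce
    rw [dif_pos h1]
    simp only
    rw [M₂.mult_φl _ _ _ h1 h2, M₁.mult_φl _ _ _ hc1 hc2]
  mult_φx p γ₁ γ₂ h1 h2 := by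
    replace h1 : M₂.s p.1.2 = Λ₂.rng γ₁ := h1
    have hc1 : M₁.s p.1.1 = Λ₁.rng (M₂.φl p.1.2 γ₁) :=
      p.2.trans (M₂.rng_φl _ _ h1).symm
    have hs2 : M₂.s (M₂.φx p.1.2 γ₁) = Λ₂.rng γ₂ := (M₂.s_φx _ _ h1).trans h2
    have hc2 : Λ₁.src (M₂.φl p.1.2 γ₁) = Λ₁.rng (M₂.φl (M₂.φx p.1.2 γ₁) γ₂) :=
      (M₂.src_φl _ _ h1).trans (M₂.rng_φl _ _ hs2).symm
    have hcomp : M₂.s p.1.2 = Λ₂.rng (Λ₂.comp γ₁ γ₂) :=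
      h1.trans (Λ₂.rng_comp _ _ h2).symm
    simp only [dif_pos hcomp, dif_pos h1, dif_pos hs2]
    refine Subtype.ext (Prod.ext ?_ ?_) <;> simp only
    · rw [M₂.mult_φl _ _ _ h1 h2, M₁.mult_φx _ _ _ hc1 hc2]
    · rw [M₂.mult_φx _ _ _ h1 h2]
  bij lam p' hsrc := by
    obtain ⟨⟨x₁, μ⟩, ⟨hb1, hb2, hb3⟩, hu1⟩ := M₁.bij lam p'.1.1 hsrc
    simp only at hb1 hb2 hb3
    have hμsrc : Λ₁.src μ = M₂.r p'.1.2 :=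
      ((M₁.s_φx x₁ μ hb1).symm.trans (congrArg M₁.s hb3)).trans p'.2
    obtain ⟨⟨x₂, γ⟩, ⟨hc1, hc2, hc3⟩, hu2⟩ := M₂.bij μ p'.1.2 hμsrc
    simp only at hc1 hc2 hc3
    have hmem : M₁.s x₁ = M₂.r x₂ := by
      rw [hb1, ← hc2, M₂.rng_φl _ _ hc1]
    refine ⟨(⟨(x₁, x₂), hmem⟩, γ), ⟨?_, ?_, ?_⟩, ?_⟩
    · exact hc1
    · simp only; rw [hc2, hb2]
    · simp only
      simp only [dif_pos hc1]
      refine Subtype.ext (Prod.ext ?_ ?_) <;> simp only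
      · rw [hc2, hb3]
      · exact hc3
    · rintro ⟨⟨⟨y₁, y₂⟩, hq⟩, δ⟩ ⟨hd1, hd2, hd3⟩
      simp only at hd1 hd2 hd3
      simp only [dif_pos hd1] at hd3
      have hd3a : M₁.φx y₁ (M₂.φl y₂ δ) = p'.1.1 := congrArg (·.1.1) hd3
      have hd3b : M₂.φx y₂ δ = p'.1.2 := congrArg (·.1.2) hd3
      have hyc : M₁.s y₁ = Λ₁.rng (M₂.φl y₂ δ) :=
        hq.trans (M₂.rng_φl _ _ hd1).symm
      have h1 := hu1 (y₁, M₂.φl y₂ δ) ⟨hyc, hd2, hd3a⟩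
      have hy1 : y₁ = x₁ := congrArg Prod.fst h1
      have hν : M₂.φl y₂ δ = μ := congrArg Prod.snd h1
      have h2 := hu2 (y₂, δ) ⟨hd1, hν, hd3b⟩
      have hy2 : y₂ = x₂ := congrArg Prod.fst h2
      have hδ : δ = γ := congrArg Prod.snd h2
      subst hy1 hy2 hδ
      rfl

theorem fibProd_isFibProd (M₁ : KMorph Λ₀ Λ₁ X₁) (M₂ : KMorph Λ₁ Λ₂ X₂) :
    IsFibProd M₁ M₂ (fibProd M₁ M₂) := by
  refine ⟨fun _ => rfl, fun _ => rfl, fun p lam h => ?_⟩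
  have h' : M₂.s p.1.2 = Λ₂.rng lam := h
  refine ⟨rfl, ?_, ?_⟩ <;> simp only [fibProd, dif_pos h']

/-- a `(Λ,Γ)` k-morph `X` is invertible in `M_k` if and only
if it is isomorphic to `X(α)` for some k-graph isomorphism `α : Γ → Λ`; and
in that case the isomorphism `α` can be chosen so that `α(γ) = φ(x,γ)₁` (the
`Λ`-component of `φ(x,γ)`) for the unique `x ∈ X` with `s(x) = r(γ)`. -/
theorem invertible_iff_Xalpha {k : ℕ} {OΛ PΛ OΓ PΓ X : Type}
    {Λ : KGraphStr k OΛ PΛ} {Γ : KGraphStr k OΓ PΓ}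
    (M : KMorph Λ Γ X) :
    MorphInvertible M ↔
    ∃ F : KGraphHom Γ Λ,
      Function.Bijective F.vmap ∧ Function.Bijective F.pmap ∧
      (∀ γ x, M.s x = Γ.rng γ → F.pmap γ = M.φl x γ) ∧
      ∃ M' : KMorph Λ Γ OΓ, IsXalpha F M' ∧ Nonempty (MorphIso M M') := by
  constructor
  · rintro ⟨Y, N, P, Q, I, J, hP, hQ, hI, hJ, ⟨isoP⟩, ⟨isoQ⟩⟩
    have hθP : ∀ p : FibCarrier M N, isoP.θ p = M.r p.1.1 := fun p =>
      (hI.1 _).symm.trans ((isoP.r_θ p).trans (hP.1 p))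
    have hθP' : ∀ p : FibCarrier M N, isoP.θ p = N.s p.1.2 := fun p =>
      (hI.2.1 _).symm.trans ((isoP.s_θ p).trans (hP.2.1 p))
    have hθQ : ∀ q : FibCarrier N M, isoQ.θ q = N.r q.1.1 := fun q =>
      (hJ.1 _).symm.trans ((isoQ.r_θ q).trans (hQ.1 q))
    have hθQ' : ∀ q : FibCarrier N M, isoQ.θ q = M.s q.1.2 := fun q =>
      (hJ.2.1 _).symm.trans ((isoQ.s_θ q).trans (hQ.2.1 q))
    have hNs_surj : Function.Surjective N.s := fun u =>
      ⟨(isoP.θ.symm u).1.2, by rw [← hθP' (isoP.θ.symm u), Equiv.apply_symm_apply]⟩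
    have hNr_surj : Function.Surjective N.r := fun v =>
      ⟨(isoQ.θ.symm v).1.1, by rw [← hθQ _, Equiv.apply_symm_apply]⟩
    have hs_surj : Function.Surjective M.s := fun v =>
      ⟨(isoQ.θ.symm v).1.2, by rw [← hθQ' _, Equiv.apply_symm_apply]⟩
    have hr_surj : Function.Surjective M.r := fun u =>
      ⟨(isoP.θ.symm u).1.1, by rw [← hθP _, Equiv.apply_symm_apply]⟩
    have hs_inj : Function.Injective M.s := by
      intro x₁ x₂ hx
      obtain ⟨y₁, hy₁⟩ := hNs_surj (M.r x₁)
      obtain ⟨y₂, hy₂⟩ := hNs_surj (M.r x₂)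
      have h1 : isoQ.θ ⟨(y₁, x₁), hy₁⟩ = isoQ.θ ⟨(y₂, x₂), hy₂⟩ := by
        rw [hθQ' _, hθQ' _]; exact hx
      exact congrArg (·.1.2) (isoQ.θ.injective h1)
    have hr_inj : Function.Injective M.r := by
      intro x₁ x₂ hx
      obtain ⟨y₁, hy₁⟩ := hNr_surj (M.s x₁)
      obtain ⟨y₂, hy₂⟩ := hNr_surj (M.s x₂)
      have h1 : isoP.θ ⟨(x₁, y₁), hy₁.symm⟩ = isoP.θ ⟨(x₂, y₂), hy₂.symm⟩ := by
        rw [hθP _, hθP _]; exact hx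
      exact congrArg (·.1.1) (isoP.θ.injective h1)
    have hs_surj' := hs_surj
    choose xof hxof using hs_surj'
    have xof_s : ∀ x, xof (M.s x) = x := fun x => hs_inj (hxof (M.s x))
    have hx : ∀ γ : PΓ, M.s (xof (Γ.rng γ)) = Γ.rng γ := fun γ => hxof _
    have pmap_eq : ∀ (x : X) (γ : PΓ), M.s x = Γ.rng γ →
        M.φl (xof (Γ.rng γ)) γ = M.φl x γ := by
      intro x γ h
      rw [← h, xof_s]
    have key_src : ∀ γ : PΓ, Λ.src (M.φl (xof (Γ.rng γ)) γ) = M.r (xof (Γ.src γ)) := by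
      intro γ
      rw [M.src_φl _ _ (hx γ), ← M.s_φx _ _ (hx γ), xof_s]
    have key_rng : ∀ γ : PΓ, Λ.rng (M.φl (xof (Γ.rng γ)) γ) = M.r (xof (Γ.rng γ)) :=
      fun γ => M.rng_φl _ _ (hx γ)
    have key_d : ∀ γ : PΓ, Λ.d (M.φl (xof (Γ.rng γ)) γ) = Γ.d γ :=
      fun γ => M.d_φl _ _ (hx γ)
    have key_comp : ∀ γ₁ γ₂ : PΓ, Γ.src γ₁ = Γ.rng γ₂ →
        M.φl (xof (Γ.rng (Γ.comp γ₁ γ₂))) (Γ.comp γ₁ γ₂) =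
          Λ.comp (M.φl (xof (Γ.rng γ₁)) γ₁) (M.φl (xof (Γ.rng γ₂)) γ₂) := by
      intro γ₁ γ₂ h
      rw [Γ.rng_comp _ _ h, M.mult_φl _ _ _ (hx γ₁) h]
      have hxx : xof (Γ.rng γ₂) = M.φx (xof (Γ.rng γ₁)) γ₁ := by
        rw [← ((M.s_φx _ _ (hx γ₁)).trans h), xof_s]
      rw [hxx]
    have key_ident : ∀ v : OΓ,
        M.φl (xof (Γ.rng (Γ.ident v))) (Γ.ident v) = Λ.ident (M.r (xof v)) := by
      intro v
      rw [Γ.rng_ident]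
      have hxv : M.s (xof v) = Γ.rng (Γ.ident v) := by rw [Γ.rng_ident]; exact hxof v
      have hd : Λ.d (M.φl (xof v) (Γ.ident v)) = 0 := by
        rw [M.d_φl _ _ hxv, Γ.d_ident]
      rw [Λ.eq_ident_of_d_zero hd, M.rng_φl _ _ hxv]
    have vmap_inj : ∀ v w : OΓ, M.r (xof v) = M.r (xof w) → v = w := by
      intro v w h
      rw [← hxof v, ← hxof w, hr_inj h]
    have pmap_inj : ∀ γ₁ γ₂ : PΓ,
        M.φl (xof (Γ.rng γ₁)) γ₁ = M.φl (xof (Γ.rng γ₂)) γ₂ → γ₁ = γ₂ := by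
      intro γ₁ γ₂ hγ
      have hsrc : M.r (M.φx (xof (Γ.rng γ₁)) γ₁) = M.r (M.φx (xof (Γ.rng γ₂)) γ₂) := by
        rw [← M.src_φl _ _ (hx γ₁), ← M.src_φl _ _ (hx γ₂), hγ]
      have hφx := hr_inj hsrc
      obtain ⟨w, hw, huniq⟩ :=
        M.bij (M.φl (xof (Γ.rng γ₁)) γ₁) (M.φx (xof (Γ.rng γ₁)) γ₁) (M.src_φl _ _ (hx γ₁))
      have e1 := huniq (xof (Γ.rng γ₁), γ₁) ⟨hx γ₁, rfl, rfl⟩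
      have e2 := huniq (xof (Γ.rng γ₂), γ₂) ⟨hx γ₂, hγ.symm, hφx.symm⟩
      exact congrArg Prod.snd (e1.trans e2.symm)
    have pmap_surj : ∀ lam : PΛ, ∃ γ, M.φl (xof (Γ.rng γ)) γ = lam := by
      intro lam
      obtain ⟨x'', hx''⟩ := hr_surj (Λ.src lam)
      obtain ⟨⟨x, γ⟩, ⟨hb1, hb2, hb3⟩, -⟩ := M.bij lam x'' hx''.symm
      simp only at hb1 hb2 hb3
      exact ⟨γ, by rw [pmap_eq x γ hb1]; exact hb2⟩
    refine ⟨{ vmap := fun v => M.r (xof v)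
              pmap := fun γ => M.φl (xof (Γ.rng γ)) γ
              src_pmap := key_src
              rng_pmap := key_rng
              d_pmap := key_d
              ident_pmap := key_ident
              comp_pmap := fun γ₁ γ₂ h => key_comp γ₁ γ₂ h },
      ⟨fun v w h => vmap_inj v w h, fun u => ?_⟩,
      ⟨fun γ₁ γ₂ h => pmap_inj γ₁ γ₂ h, fun lam => pmap_surj lam⟩,
      fun γ x h => pmap_eq x γ h,
      { countable := Γ.countableObj
        r := fun v => M.r (xof v)
        s := id
        φl := fun _ γ => M.φl (xof (Γ.rng γ)) γ
        φx := fun _ γ => Γ.src γ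
        src_φl := fun _ γ _ => key_src γ
        d_φl := fun _ γ _ => key_d γ
        s_φx := fun _ _ _ => rfl
        rng_φl := fun v γ h => by
          rw [key_rng γ]
          exact congrArg (fun w => M.r (xof w)) (show (v : OΓ) = Γ.rng γ from h).symm
        mult_φl := fun v γ₁ γ₂ h1 h2 => key_comp γ₁ γ₂ h2
        mult_φx := fun v γ₁ γ₂ h1 h2 => Γ.src_comp _ _ h2
        bij := ?_ }, ⟨fun _ => rfl, fun _ => rfl, fun v γ h => ⟨rfl, rfl⟩⟩,
      ⟨⟨Equiv.ofBijective M.s ⟨hs_inj, hs_surj⟩, ?_, ?_, ?_, ?_⟩⟩⟩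
    · -- vmap surjective
      obtain ⟨x, hxr⟩ := hr_surj u
      exact ⟨M.s x, by show M.r (xof (M.s x)) = u; rw [xof_s]; exact hxr⟩
    · -- bij of M'
      intro lam v' h
      obtain ⟨γ, hγ⟩ := pmap_surj lam
      have hsγ : Γ.src γ = v' := by
        refine vmap_inj _ _ ?_
        rw [← key_src γ, hγ]
        exact h
      refine ⟨(Γ.rng γ, γ), ⟨rfl, hγ, hsγ⟩, ?_⟩
      rintro ⟨v, δ⟩ ⟨e1, e2, e3⟩
      simp only at e1 e2 e3
      have hδ : δ = γ := pmap_inj _ _ (e2.trans hγ.symm)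
      subst hδ
      exact Prod.ext e1 rfl
    · -- r_θ
      intro x
      show M.r (xof (M.s x)) = M.r x
      rw [xof_s]
    · -- s_θ
      intro x
      rfl
    · -- φl_θ
      intro x γ h
      exact pmap_eq x γ h
    · -- φx_θ
      intro x γ h
      exact (M.s_φx _ _ h).symm
  · rintro ⟨F, hv, hp, hφ, M', hX, ⟨iso⟩⟩
    classical
    let ev : OΓ ≃ OΛ := Equiv.ofBijective F.vmap hv
    let ep : PΓ ≃ PΛ := Equiv.ofBijective F.pmap hp
    have hep : ∀ lam : PΛ, F.pmap (ep.symm lam) = lam := fun lam => ep.apply_symm_apply lam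
    have heps : ∀ γ : PΓ, ep.symm (F.pmap γ) = γ := fun γ => ep.symm_apply_apply γ
    have hMs : ∀ x, M.s x = iso.θ x := fun x => (iso.s_θ x).symm.trans (hX.2.1 _)
    have hMr : ∀ x, M.r x = F.vmap (iso.θ x) := fun x => (iso.r_θ x).symm.trans (hX.1 _)
    have hk : ∀ x, F.vmap (M.s x) = M.r x := fun x => by rw [hMs x, ← hMr x]
    have hsbij : Function.Bijective M.s := by
      have hfun : M.s = fun x => iso.θ x := funext hMs
      rw [hfun]; exact iso.θ.bijective
    have hrbij : Function.Bijective M.r := by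
      have hfun : M.r = fun x => F.vmap (iso.θ x) := funext hMr
      rw [hfun]; exact hv.comp iso.θ.bijective
    let er : X ≃ OΛ := Equiv.ofBijective M.r hrbij
    let es : X ≃ OΓ := Equiv.ofBijective M.s hsbij
    have hNsrc : ∀ lam : PΛ, Γ.src (ep.symm lam) = ev.symm (Λ.src lam) := by
      intro lam
      apply ev.injective
      rw [Equiv.apply_symm_apply]
      show F.vmap (Γ.src (ep.symm lam)) = Λ.src lam
      rw [← F.src_pmap, hep]
    have hNrng : ∀ lam : PΛ, Γ.rng (ep.symm lam) = ev.symm (Λ.rng lam) := by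
      intro lam
      apply ev.injective
      rw [Equiv.apply_symm_apply]
      show F.vmap (Γ.rng (ep.symm lam)) = Λ.rng lam
      rw [← F.rng_pmap, hep]
    let N : KMorph Γ Λ OΛ :=
      { countable := Λ.countableObj
        r := fun u => ev.symm u
        s := id
        φl := fun _ lam => ep.symm lam
        φx := fun _ lam => Λ.src lam
        src_φl := fun u lam _ => hNsrc lam
        d_φl := fun u lam _ => by
          show Γ.d (ep.symm lam) = Λ.d lam
          rw [← F.d_pmap, hep]
        s_φx := fun _ _ _ => rfl
        rng_φl := fun u lam h => by
          show Γ.rng (ep.symm lam) = ev.symm u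
          rw [hNrng lam, ← h]
          rfl
        mult_φl := fun u l₁ l₂ h1 h2 => by
          show ep.symm (Λ.comp l₁ l₂) = Γ.comp (ep.symm l₁) (ep.symm l₂)
          apply ep.injective
          show F.pmap _ = F.pmap _
          have hcc : Γ.src (ep.symm l₁) = Γ.rng (ep.symm l₂) := by
            rw [hNsrc, hNrng, h2]
          rw [hep, F.comp_pmap _ _ hcc, hep, hep]
        mult_φx := fun u l₁ l₂ h1 h2 => Λ.src_comp _ _ h2
        bij := by
          intro δ u' h
          replace h : Γ.src δ = ev.symm u' := h
          refine ⟨(Λ.rng (F.pmap δ), F.pmap δ), ⟨rfl, heps δ, ?_⟩, ?_⟩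
          · show Λ.src (F.pmap δ) = u'
            rw [F.src_pmap, h]
            exact ev.apply_symm_apply u'
          · rintro ⟨u, lam⟩ ⟨e1, e2, e3⟩
            simp only at e1 e2 e3
            have hlam : lam = F.pmap δ := by rw [← e2, hep]
            subst hlam
            exact Prod.ext e1 rfl }
    have hp2 : ∀ p : FibCarrier M N, M.r p.1.1 = p.1.2 := by
      intro p
      have hc : M.s p.1.1 = ev.symm p.1.2 := p.2
      exact ((hk p.1.1).symm.trans (congrArg F.vmap hc)).trans (ev.apply_symm_apply p.1.2)
    let θP : FibCarrier M N ≃ OΛ :=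
      { toFun := fun p => M.r p.1.1
        invFun := fun u => ⟨(er.symm u, u), by
          show M.s (er.symm u) = ev.symm u
          apply ev.injective
          rw [Equiv.apply_symm_apply]
          show F.vmap (M.s (er.symm u)) = u
          rw [hk]
          exact er.apply_symm_apply u⟩
        left_inv := fun p => Subtype.ext (Prod.ext (er.symm_apply_apply p.1.1) (hp2 p))
        right_inv := fun u => er.apply_symm_apply u }
    have hq2 : ∀ q : FibCarrier N M, q.1.1 = M.r q.1.2 := fun q => q.2
    let θQ : FibCarrier N M ≃ OΓ :=
      { toFun := fun q => M.s q.1.2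
        invFun := fun v => ⟨(M.r (es.symm v), es.symm v), rfl⟩
        left_inv := fun q => Subtype.ext (Prod.ext
          ((congrArg M.r (es.symm_apply_apply q.1.2)).trans (hq2 q).symm)
          (es.symm_apply_apply q.1.2))
        right_inv := fun v => es.apply_symm_apply v }
    refine ⟨OΛ, N, fibProd M N, fibProd N M, idMorph Λ, idMorph Γ,
      fibProd_isFibProd M N, fibProd_isFibProd N M, idMorph_isIdMorph Λ, idMorph_isIdMorph Γ,
      ⟨⟨θP, fun p => rfl, fun p => hp2 p, ?_, ?_⟩⟩,
      ⟨⟨θQ, ?_, fun q => rfl, ?_, ?_⟩⟩⟩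
    · -- φl_θ for P
      intro p lam h
      replace h : p.1.2 = Λ.rng lam := h
      have hcomp : M.s p.1.1 = Γ.rng (ep.symm lam) := by
        rw [hNrng lam, ← h]
        exact p.2
      show lam = M.φl p.1.1 (ep.symm lam)
      rw [← hφ (ep.symm lam) p.1.1 hcomp]
      exact (hep lam).symm
    · -- φx_θ for P
      intro p lam h
      replace h : p.1.2 = Λ.rng lam := h
      have hcomp : M.s p.1.1 = Γ.rng (ep.symm lam) := by
        rw [hNrng lam, ← h]
        exact p.2
      have h' : N.s p.1.2 = Λ.rng lam := h
      show Λ.src lam = θP ((fibProd M N).φx p lam)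
      simp only [fibProd, dif_pos h']
      show Λ.src lam = M.r (M.φx p.1.1 (ep.symm lam))
      rw [← M.src_φl _ _ hcomp, ← hφ _ _ hcomp, hep]
    · -- r_θ for Q
      intro q
      show M.s q.1.2 = ev.symm q.1.1
      exact ((congrArg ev.symm ((hq2 q).trans (hk q.1.2).symm)).trans
        (ev.symm_apply_apply _)).symm
    · -- φl_θ for Q
      intro q γ h
      replace h : M.s q.1.2 = Γ.rng γ := h
      show γ = ep.symm (M.φl q.1.2 γ)
      rw [← hφ γ q.1.2 h]
      exact (heps γ).symm
    · -- φx_θ for Q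
      intro q γ h
      replace h : M.s q.1.2 = Γ.rng γ := h
      show Γ.src γ = θQ ((fibProd N M).φx q γ)
      simp only [fibProd, dif_pos h]
      show Γ.src γ = M.s (M.φx q.1.2 γ)
      exact (M.s_φx _ _ h).symm
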